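/- Theorem 1 (Abelian symmetry bound): Suppose the unitary U, the density matrix ρ, and every Kraus operator of the partition X commute with a Hermitian operator Z with eigenspace decomposition H = ⊕_λ H_λ. Write ρ = ⊕_λ p_λ ρ_λ with p_λ = Tr(ρ|_{H_λ}), U_λ = U|_{H_λ}, X_λ the restricted partition. Then for all t, H_AFL(ρ, U, X, t) ≤ ∑_λ p_λ H_AFL(ρ_λ, U_λ, X_λ, t) + H({p_λ}), where H({p_λ}) is the Shannon entropy of the distribution {p_λ}. -/

import Mathlib

open scoped BigOperators ComplexOrder
open Matrix Kronecker

namespace AFL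

variable {n : Type*} [Fintype n] [DecidableEq n]

/-- von Neumann entropy of a (Hermitian) matrix, via its eigenvalues. -/
noncomputable def vNEntropy (ρ : Matrix n n ℂ) : ℝ :=
  if h : ρ.IsHermitian then -∑ i, h.eigenvalues i * Real.log (h.eigenvalues i) else 0

/-- A density matrix: positive semidefinite (hence Hermitian) with unit trace. -/
def IsDensity (ρ : Matrix n n ℂ) : Prop := ρ.PosSemidef ∧ ρ.trace = 1

/-- An operational partition of unity (Kraus operators of a channel). -/
def IsPartition {K : Type*} [Fintype K] (X : K → Matrix n n ℂ) : Prop :=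
  ∑ i, (X i)ᴴ * X i = 1

/-- The entropy-exchange (environment) state ρ̃[X]_{ij} = Tr(Xⁱ ρ Xʲ†). -/
noncomputable def envState {K : Type*} [Fintype K] (X : K → Matrix n n ℂ)
    (ρ : Matrix n n ℂ) : Matrix K K ℂ :=
  Matrix.of fun i j => (X i * ρ * (X j)ᴴ).trace

/-- Multitime Kraus operator U X^{i_t} ⋯ U X^{i_1} of the t-step evolved partition (UX)^t. -/
noncomputable def multiKraus {K : Type*} (U : Matrix n n ℂ) (X : K → Matrix n n ℂ)
    (t : ℕ) (idx : Fin t → K) : Matrix n n ℂ :=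
  (List.ofFn fun k => U * X (idx k)).prod

/-- Cumulative AFL entropy: von Neumann entropy of the environment state after t steps. -/
noncomputable def HAFL {K : Type*} [Fintype K] [DecidableEq K]
    (ρ U : Matrix n n ℂ) (X : K → Matrix n n ℂ) (t : ℕ) : ℝ :=
  vNEntropy (envState (multiKraus U X t) ρ)

/-- Shannon entropy of a probability vector. -/
noncomputable def shannon {ι : Type*} [Fintype ι] (p : ι → ℝ) : ℝ :=
  -∑ i, p i * Real.log (p i)

end AFL

namespace AFL

/-- Restriction of an operator to the charge sector (block) indexed by l. -/
def restrict {L : Type*} {m : L → Type*}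
    (A : Matrix ((l : L) × m l) ((l : L) × m l) ℂ) (l : L) : Matrix (m l) (m l) ℂ :=
  Matrix.of fun a b => A ⟨l, a⟩ ⟨l, b⟩

/-- The Hermitian symmetry operator Z = ⊕ z_l • 1 acting as a distinct scalar on each
eigenspace (charge sector). -/
noncomputable def symZ {L : Type*} [DecidableEq L] {m : L → Type*}
    [∀ l, Fintype (m l)] [∀ l, DecidableEq (m l)] (z : L → ℝ) :
    Matrix ((l : L) × m l) ((l : L) × m l) ℂ :=
  Matrix.blockDiagonal' fun l => (z l : ℂ) • (1 : Matrix (m l) (m l) ℂ)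

/-- p_l = Tr(ρ restricted to sector l). -/
noncomputable def sectorProb {L : Type*} {m : L → Type*} [∀ l, Fintype (m l)]
    (ρ : Matrix ((l : L) × m l) ((l : L) × m l) ℂ) (l : L) : ℝ :=
  ((restrict ρ l).trace).re

/-- ρ_l = p_l⁻¹ • (ρ restricted to sector l), the normalized state in sector l. -/
noncomputable def sectorState {L : Type*} {m : L → Type*} [∀ l, Fintype (m l)]
    (ρ : Matrix ((l : L) × m l) ((l : L) × m l) ℂ) (l : L) : Matrix (m l) (m l) ℂ :=
  ((sectorProb ρ l : ℂ))⁻¹ • restrict ρ l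

end AFL

/-!
Since `Z` acts as a distinct scalar on each sector, commuting with it forces `U`, `ρ` and the
Kraus operators to be block diagonal. Then so are the multitime Kraus operators, and the
environment state is the mixture `ρ̃ = ∑ p_l ρ̃_l` of the sector environment states. What
remains is the mixing bound `S(∑ p_l σ_l) ≤ ∑ p_l S(σ_l) + H(p)`. Write `σ_l = S_lᴴ S_l` with
`S_l S_lᴴ = diag(λ_l)` and stack the `√p_l S_l` into one matrix `D`. Then `Dᴴ D = ∑ p_l σ_l`
has the same entropy as `D Dᴴ`. By Schur concavity, that entropy is at most the entropy of the
diagonal `(p_l λ_{l,i})`, which splits as `∑ p_l S(σ_l) + H(p)`.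
-/

namespace AFL

section Entropy

variable {n : Type*} [Fintype n] [DecidableEq n]

theorem shannon_eq_sum_negMulLog {ι : Type*} [Fintype ι] (p : ι → ℝ) :
    shannon p = ∑ i, Real.negMulLog (p i) := by
  simp [shannon, Real.negMulLog, Finset.sum_neg_distrib]

theorem vNEntropy_eq_sum_negMulLog {A : Matrix n n ℂ} (hA : A.IsHermitian) :
    vNEntropy A = ∑ i, Real.negMulLog (hA.eigenvalues i) := by
  simp [vNEntropy, hA, Real.negMulLog, Finset.sum_neg_distrib]

theorem vNEntropy_eq_sum_roots_charpoly {A : Matrix n n ℂ} (hA : A.IsHermitian) :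
    vNEntropy A = (A.charpoly.roots.map fun c => Real.negMulLog c.re).sum := by
  simp [vNEntropy_eq_sum_negMulLog hA, hA.roots_charpoly_eq_eigenvalues]

open Polynomial in
/-- `Dᴴ * D` and `D * Dᴴ` share their nonzero spectrum, and zero eigenvalues carry no
entropy. -/
theorem vNEntropy_conjTranspose_mul_self {m : Type*} [Fintype m] [DecidableEq m]
    (D : Matrix m n ℂ) : vNEntropy (Dᴴ * D) = vNEntropy (D * Dᴴ) := by
  rw [vNEntropy_eq_sum_roots_charpoly (isHermitian_conjTranspose_mul_self D),
    vNEntropy_eq_sum_roots_charpoly (isHermitian_mul_conjTranspose_self D)]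
  have h := congrArg (fun p : ℂ[X] => (p.roots.map fun c => Real.negMulLog c.re).sum)
    (charpoly_mul_comm' D Dᴴ)
  simpa [roots_mul, (charpoly_monic _).ne_zero, X_ne_zero, Multiset.map_nsmul,
    Multiset.sum_nsmul] using h.symm

theorem sum_normSq_apply_eq_one {W : Matrix n n ℂ} (hW : W * star W = 1) (i : n) :
    ∑ k, Complex.normSq (W i k) = 1 := by
  have h := congrFun (congrFun hW i) i
  simp only [Matrix.mul_apply, Matrix.star_apply, RCLike.star_def, Complex.mul_conj,
    Matrix.one_apply_eq] at h
  exact_mod_cast h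

theorem _root_.Matrix.IsHermitian.re_apply_self_eq_sum {A : Matrix n n ℂ} (hA : A.IsHermitian)
    (i : n) : (A i i).re = ∑ k, Complex.normSq ((hA.eigenvectorUnitary : Matrix n n ℂ) i k) *
      hA.eigenvalues k := by
  conv_lhs => rw [hA.spectral_theorem, Unitary.conjStarAlgAut_apply]
  rw [Matrix.mul_apply, Complex.re_sum]
  simp only [Matrix.mul_diagonal, Matrix.star_apply, Function.comp_apply, RCLike.star_def]
  refine Finset.sum_congr rfl fun k _ => ?_
  rw [mul_right_comm, Complex.mul_conj, Complex.re_ofReal_mul]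
  rfl

/-- The diagonal of `A` is the image of its spectrum under the doubly stochastic matrix
`|V i k|²`, so concavity of `negMulLog` (Jensen, row by row) gives the bound. -/
theorem vNEntropy_le_sum_negMulLog_diag {A : Matrix n n ℂ} (hA : A.PosSemidef) :
    vNEntropy A ≤ ∑ i, Real.negMulLog (A i i).re := by
  set V : Matrix n n ℂ := (hA.1.eigenvectorUnitary : Matrix n n ℂ)
  set w : n → n → ℝ := fun i k => Complex.normSq (V i k)
  have hV : V ∈ Matrix.unitaryGroup n ℂ := hA.1.eigenvectorUnitary.2
  have hrow : ∀ i, ∑ k, w i k = 1 := sum_normSq_apply_eq_one (Unitary.mul_star_self_of_mem hV)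
  have hcol : ∀ k, ∑ i, w i k = 1 := fun k => by
    simpa [w] using sum_normSq_apply_eq_one (W := star V)
      (by rw [star_star]; exact Unitary.star_mul_self_of_mem hV) k
  calc vNEntropy A = ∑ k, (∑ i, w i k) * Real.negMulLog (hA.1.eigenvalues k) := by
        simp [vNEntropy_eq_sum_negMulLog hA.1, hcol]
    _ = ∑ i, ∑ k, w i k * Real.negMulLog (hA.1.eigenvalues k) := by
        simp only [Finset.sum_mul]; exact Finset.sum_comm
    _ ≤ ∑ i, Real.negMulLog (∑ k, w i k * hA.1.eigenvalues k) := by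
        gcongr with i
        exact Real.concaveOn_negMulLog.le_map_sum (fun k _ => Complex.normSq_nonneg _) (hrow i)
          (fun k _ => hA.eigenvalues_nonneg k)
    _ = ∑ i, Real.negMulLog (A i i).re := by
        simp only [hA.1.re_apply_self_eq_sum, w, V]

theorem _root_.Matrix.PosSemidef.exists_conjTranspose_mul_self_eq_and_diagonal
    {A : Matrix n n ℂ} (hA : A.PosSemidef) :
    ∃ S : Matrix n n ℂ,
      Sᴴ * S = A ∧ S * Sᴴ = Matrix.diagonal fun i => (hA.1.eigenvalues i : ℂ) := by
  set V : Matrix n n ℂ := (hA.1.eigenvectorUnitary : Matrix n n ℂ)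
  have hV : V ∈ Matrix.unitaryGroup n ℂ := hA.1.eigenvectorUnitary.2
  set R : Matrix n n ℂ := Matrix.diagonal fun i => (√(hA.1.eigenvalues i) : ℂ)
  have hR : star R = R := by
    simp [R, Matrix.star_eq_conjTranspose, Matrix.diagonal_conjTranspose]
  have hRR : R * R = Matrix.diagonal fun i => (hA.1.eigenvalues i : ℂ) := by
    simp [R, Matrix.diagonal_mul_diagonal, ← Complex.ofReal_mul,
      Real.mul_self_sqrt (hA.eigenvalues_nonneg _)]
  have hS : star (R * star V) = V * R := by rw [star_mul, star_star, hR]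
  refine ⟨R * star V, ?_, ?_⟩
  · rw [← Matrix.star_eq_conjTranspose, hS, Matrix.mul_assoc, ← Matrix.mul_assoc R, hRR]
    conv_rhs => rw [hA.1.spectral_theorem, Unitary.conjStarAlgAut_apply]
    simp [V, Matrix.mul_assoc, Function.comp_def]
  · rw [← Matrix.star_eq_conjTranspose, hS, Matrix.mul_assoc, ← Matrix.mul_assoc (star V),
      Unitary.star_mul_self_of_mem hV, Matrix.one_mul, hRR]

theorem vNEntropy_sum_smul_le {L I : Type*} [Fintype L] [Fintype I] [DecidableEq I]
    (p : L → ℝ) (σ : L → Matrix I I ℂ) (hp : ∀ l, 0 ≤ p l)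
    (hσ : ∀ l, (σ l).PosSemidef)
    (htr : ∀ l, p l ≠ 0 → (σ l).trace = 1) :
    vNEntropy (∑ l, (p l : ℂ) • σ l) ≤ ∑ l, p l * vNEntropy (σ l) + shannon p := by
  classical
  choose S hSS hSdiag using fun l => (hσ l).exists_conjTranspose_mul_self_eq_and_diagonal
  set q : L → I → ℝ := fun l => (hσ l).1.eigenvalues
  let D : Matrix (L × I) I ℂ := Matrix.of fun a j => (√(p a.1) : ℂ) * S a.1 a.2 j
  have hsqrt : ∀ l, (√(p l) : ℂ) * (√(p l) : ℂ) = p l := fun l => by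
    rw [← Complex.ofReal_mul, Real.mul_self_sqrt (hp l)]
  have hDD : Dᴴ * D = ∑ l, (p l : ℂ) • σ l := by
    ext j j'
    simp only [Matrix.mul_apply, Matrix.conjTranspose_apply, Matrix.of_apply, D,
      Fintype.sum_prod_type, Matrix.sum_apply, Matrix.smul_apply, ← hSS, smul_eq_mul,
      Finset.mul_sum, star_mul', Complex.star_def, Complex.conj_ofReal]
    refine Finset.sum_congr rfl fun l _ => Finset.sum_congr rfl fun i _ => ?_
    linear_combination (starRingEnd ℂ (S l i j) * S l i j') * hsqrt l
  have hdiag : ∀ a, ((D * Dᴴ) a a).re = p a.1 * q a.1 a.2 := by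
    rintro ⟨l, i⟩
    have h := congrFun (congrFun (hSdiag l) i) i
    simp only [Matrix.mul_apply, Matrix.conjTranspose_apply, Matrix.diagonal_apply_eq,
      Complex.star_def] at h
    simp only [Matrix.mul_apply, Matrix.conjTranspose_apply, Matrix.of_apply, D, star_mul',
      Complex.star_def, Complex.conj_ofReal]
    have hfactor :
        ∑ j, (√(p l) : ℂ) * S l i j * ((√(p l) : ℂ) * starRingEnd ℂ (S l i j)) =
          p l * ∑ j, S l i j * starRingEnd ℂ (S l i j) := by
      rw [Finset.mul_sum]
      exact Finset.sum_congr rfl fun j _ => by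
        linear_combination (S l i j * starRingEnd ℂ (S l i j)) * hsqrt l
    rw [hfactor, h, ← Complex.ofReal_mul, Complex.ofReal_re]
  have hsplit : ∀ l, ∑ i, Real.negMulLog (p l * q l i) =
      p l * vNEntropy (σ l) + Real.negMulLog (p l) := fun l => by
    rcases eq_or_ne (p l) 0 with h | h
    · simp [h]
    · have hq : ∑ i, q l i = 1 := by
        have := (hσ l).1.trace_eq_sum_eigenvalues
        rw [htr l h, ← RCLike.ofReal_sum] at this
        exact RCLike.ofReal_injective (this.symm.trans RCLike.ofReal_one.symm)
      simp only [Real.negMulLog_mul, Finset.sum_add_distrib, ← Finset.sum_mul, ← Finset.mul_sum,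
        hq, one_mul, vNEntropy_eq_sum_negMulLog (hσ l).1, q]
      ring
  calc vNEntropy (∑ l, (p l : ℂ) • σ l) = vNEntropy (D * Dᴴ) := by
        rw [← hDD, vNEntropy_conjTranspose_mul_self]
    _ ≤ ∑ a, Real.negMulLog ((D * Dᴴ) a a).re :=
        vNEntropy_le_sum_negMulLog_diag (Matrix.posSemidef_self_mul_conjTranspose D)
    _ = ∑ l, (p l * vNEntropy (σ l) + Real.negMulLog (p l)) := by
        simp only [hdiag, Fintype.sum_prod_type, hsplit]
    _ = ∑ l, p l * vNEntropy (σ l) + shannon p := by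
        rw [Finset.sum_add_distrib, shannon_eq_sum_negMulLog]

end Entropy

section Environment

variable {n : Type*} [Fintype n] {K : Type*}

theorem multiKraus_succ_cons [DecidableEq n] (U : Matrix n n ℂ) (X : K → Matrix n n ℂ)
    (t : ℕ) (i : K) (idx : Fin t → K) :
    multiKraus U X (t + 1) (Fin.cons i idx) = U * X i * multiKraus U X t idx := by
  simp [multiKraus, List.ofFn_succ]

variable [Fintype K]

theorem envState_eq_sum (X : K → Matrix n n ℂ) (ρ : Matrix n n ℂ) :
    envState X ρ =
      ∑ a, Matrix.of (fun i b => X i a b) * ρ * (Matrix.of fun i b => X i a b)ᴴ := by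
  ext i j
  simp [envState, Matrix.trace, Matrix.sum_apply, Matrix.mul_apply]

theorem envState_posSemidef (X : K → Matrix n n ℂ) {ρ : Matrix n n ℂ} (hρ : ρ.PosSemidef) :
    (envState X ρ).PosSemidef := by
  rw [envState_eq_sum]
  exact Matrix.posSemidef_sum _ fun a _ => hρ.mul_mul_conjTranspose_same _

theorem envState_smul (X : K → Matrix n n ℂ) (c : ℂ) (ρ : Matrix n n ℂ) :
    envState X (c • ρ) = c • envState X ρ := by
  ext i j
  simp [envState, Matrix.trace_smul]

variable [DecidableEq n]

theorem trace_envState {X : K → Matrix n n ℂ} (hX : IsPartition X) (ρ : Matrix n n ℂ) :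
    (envState X ρ).trace = ρ.trace := by
  calc (envState X ρ).trace = ∑ i, ((X i)ᴴ * X i * ρ).trace := by
        refine Finset.sum_congr rfl fun i _ => ?_
        rw [Matrix.diag_apply, envState, Matrix.of_apply, Matrix.trace_mul_cycle,
          Matrix.mul_assoc]
    _ = ρ.trace := by rw [← Matrix.trace_sum, ← Finset.sum_mul, hX, Matrix.one_mul]

theorem isPartition_multiKraus {U : Matrix n n ℂ} {X : K → Matrix n n ℂ} (hU : Uᴴ * U = 1)
    (hX : IsPartition X) : ∀ t, IsPartition (multiKraus U X t)
  | 0 => by simp [IsPartition, multiKraus]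
  | t + 1 => by
    have hstep : ∀ i (M : Matrix n n ℂ),
        (U * X i * M)ᴴ * (U * X i * M) = Mᴴ * ((X i)ᴴ * X i) * M := fun i M => by
        simp only [Matrix.conjTranspose_mul, Matrix.mul_assoc]
        rw [← Matrix.mul_assoc Uᴴ, hU, Matrix.one_mul]
    unfold IsPartition at hX ⊢
    rw [← (Fin.consEquiv fun _ => K).sum_comp, Fintype.sum_prod_type, Finset.sum_comm]
    change ∑ idx, ∑ i, (multiKraus U X (t + 1) (Fin.cons i idx))ᴴ *
      multiKraus U X (t + 1) (Fin.cons i idx) = 1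
    simp only [multiKraus_succ_cons, hstep, ← Finset.sum_mul, ← Finset.mul_sum, hX,
      Matrix.mul_one]
    exact isPartition_multiKraus hU hX t

end Environment

section Blocks

open Matrix

variable {L : Type*} [Fintype L] [DecidableEq L] {m : L → Type*} [∀ l, Fintype (m l)]

theorem blockDiagonal'_conjTranspose_mul_self (f : ∀ l, Matrix (m l) (m l) ℂ) :
    (blockDiagonal' f)ᴴ * blockDiagonal' f = blockDiagonal' fun l => (f l)ᴴ * f l := by
  rw [blockDiagonal'_conjTranspose, blockDiagonal'_mul]

theorem envState_blockDiagonal' {K : Type*} [Fintype K] (Y : K → ∀ l, Matrix (m l) (m l) ℂ)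
    (r : ∀ l, Matrix (m l) (m l) ℂ) :
    envState (fun i => blockDiagonal' (Y i)) (blockDiagonal' r) =
      ∑ l, envState (fun i => Y i l) (r l) := by
  ext i j
  simp only [Matrix.sum_apply, envState, of_apply, blockDiagonal'_conjTranspose,
    ← blockDiagonal'_mul, trace_blockDiagonal']

variable [∀ l, DecidableEq (m l)]

/-- Entrywise, `A Z = Z A` reads `(z l' - z l) A ⟨l, i⟩ ⟨l', j⟩ = 0`. -/
theorem eq_blockDiagonal'_restrict_of_commute {z : L → ℝ} (hz : Function.Injective z)
    {A : Matrix ((l : L) × m l) ((l : L) × m l) ℂ}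
    (h : A * symZ (m := m) z = symZ (m := m) z * A) :
    A = blockDiagonal' (restrict A) := by
  ext ⟨l, i⟩ ⟨l', j⟩
  rcases eq_or_ne l l' with rfl | hll
  · exact (blockDiagonal'_apply_eq (restrict A) l i j).symm
  · have hA := congrFun (congrFun h ⟨l, i⟩) ⟨l', j⟩
    simp only [symZ, smul_one_eq_diagonal, blockDiagonal'_diagonal, mul_diagonal,
      diagonal_mul] at hA
    have hz' : (z l' : ℂ) - z l ≠ 0 := sub_ne_zero.mpr (by exact_mod_cast hz.ne hll.symm)
    rw [blockDiagonal'_apply_ne _ _ _ hll]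
    have hprod : ((z l' : ℂ) - z l) * A ⟨l, i⟩ ⟨l', j⟩ = 0 := by linear_combination hA
    exact (mul_eq_zero.mp hprod).resolve_left hz'

theorem conjTranspose_mul_self_eq_one_of_blockDiagonal' {f : ∀ l, Matrix (m l) (m l) ℂ}
    (h : (blockDiagonal' f)ᴴ * blockDiagonal' f = 1) (l : L) : (f l)ᴴ * f l = 1 := by
  rw [blockDiagonal'_conjTranspose_mul_self, ← blockDiagonal'_one, blockDiagonal'_inj] at h
  exact congrFun h l

theorem isPartition_of_blockDiagonal' {K : Type*} [Fintype K]
    {Y : K → ∀ l, Matrix (m l) (m l) ℂ} (h : IsPartition fun i => blockDiagonal' (Y i))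
    (l : L) :
    IsPartition fun i => Y i l := by
  unfold IsPartition at h ⊢
  simp only [blockDiagonal'_conjTranspose_mul_self] at h
  have hsum := map_sum (blockDiagonal'AddMonoidHom m m ℂ) (fun i l => (Y i l)ᴴ * Y i l) .univ
  simp only [blockDiagonal'AddMonoidHom_apply] at hsum
  rw [← hsum, ← blockDiagonal'_one] at h
  simpa using congrFun (blockDiagonal'_injective h) l

theorem multiKraus_blockDiagonal' {K : Type*} (U : ∀ l, Matrix (m l) (m l) ℂ)
    (X : K → ∀ l, Matrix (m l) (m l) ℂ) (t : ℕ) (idx : Fin t → K) :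
    multiKraus (blockDiagonal' U) (fun i => blockDiagonal' (X i)) t idx =
      blockDiagonal' fun l => multiKraus (U l) (fun i => X i l) t idx := by
  induction t with
  | zero =>
    simp only [multiKraus, List.ofFn_zero, List.prod_nil]
    exact (blockDiagonal'_one (m' := m) (α := ℂ)).symm
  | succ t ih =>
    rw [← Fin.cons_self_tail idx, multiKraus_succ_cons, ih]
    simp only [multiKraus_succ_cons, blockDiagonal'_mul]

end Blocks

section Sectors

variable {L : Type*} {m : L → Type*} {ρ : Matrix ((l : L) × m l) ((l : L) × m l) ℂ}

theorem posSemidef_restrict (hρ : ρ.PosSemidef) (l : L) : (restrict ρ l).PosSemidef :=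
  hρ.submatrix (Sigma.mk l)

variable [∀ l, Fintype (m l)]

theorem trace_restrict (hρ : ρ.PosSemidef) (l : L) :
    (restrict ρ l).trace = sectorProb ρ l :=
  Complex.eq_re_of_ofReal_le (r := 0) <| by
    rw [Complex.ofReal_zero]; exact (posSemidef_restrict hρ l).trace_nonneg

theorem sectorProb_nonneg (hρ : ρ.PosSemidef) (l : L) : 0 ≤ sectorProb ρ l :=
  (Complex.nonneg_iff.mp (posSemidef_restrict hρ l).trace_nonneg).1

theorem restrict_eq_sectorProb_smul_sectorState (hρ : ρ.PosSemidef) (l : L) :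
    restrict ρ l = (sectorProb ρ l : ℂ) • sectorState ρ l := by
  rcases eq_or_ne (sectorProb ρ l) 0 with h | h
  · rw [h, Complex.ofReal_zero, zero_smul]
    exact (posSemidef_restrict hρ l).trace_eq_zero_iff.mp (by rw [trace_restrict hρ, h]; simp)
  · rw [sectorState, smul_smul, mul_inv_cancel₀ (by exact_mod_cast h), one_smul]

theorem sectorState_posSemidef (hρ : ρ.PosSemidef) (l : L) : (sectorState ρ l).PosSemidef :=
  (posSemidef_restrict hρ l).smul <| by
    rw [← Complex.ofReal_inv]; exact_mod_cast inv_nonneg.mpr (sectorProb_nonneg hρ l)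

theorem trace_sectorState (hρ : ρ.PosSemidef) {l : L} (h : sectorProb ρ l ≠ 0) :
    (sectorState ρ l).trace = 1 := by
  rw [sectorState, Matrix.trace_smul, trace_restrict hρ, smul_eq_mul,
    inv_mul_cancel₀ (by exact_mod_cast h)]

theorem envState_multiKraus_eq_sum_smul [Fintype L] [DecidableEq L] [∀ l, DecidableEq (m l)]
    {K : Type*} [Fintype K] {U : Matrix ((l : L) × m l) ((l : L) × m l) ℂ}
    {X : K → Matrix ((l : L) × m l) ((l : L) × m l) ℂ} (hρ : ρ.PosSemidef)
    (hUb : U = Matrix.blockDiagonal' (restrict U)) (hρb : ρ = Matrix.blockDiagonal' (restrict ρ))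
    (hXb : X = fun i => Matrix.blockDiagonal' (restrict (X i))) (t : ℕ) :
    envState (multiKraus U X t) ρ = ∑ l, (sectorProb ρ l : ℂ) •
      envState (multiKraus (restrict U l) (fun i => restrict (X i) l) t) (sectorState ρ l) := by
  calc envState (multiKraus U X t) ρ
      = envState (multiKraus (Matrix.blockDiagonal' (restrict U))
          (fun i => Matrix.blockDiagonal' (restrict (X i))) t)
          (Matrix.blockDiagonal' (restrict ρ)) := by
        rw [← hUb, ← hρb, ← hXb]
    _ = ∑ l, envState (multiKraus (restrict U l) (fun i => restrict (X i) l) t)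
          (restrict ρ l) := by
        rw [funext (multiKraus_blockDiagonal' _ _ t), envState_blockDiagonal']
    _ = _ := by simp only [restrict_eq_sectorProb_smul_sectorState hρ, envState_smul]

end Sectors

end AFL

/-- Theorem 1: if the unitary U, the state ρ and every Kraus operator of
the partition X commute with the Hermitian operator Z = ⊕ z_l • 1 (z injective, so the
sectors are exactly the eigenspaces of Z), then for all t,
H_AFL(ρ,U,X,t) ≤ ∑_l p_l H_AFL(ρ_l,U_l,X_l,t) + H({p_l}). -/
theorem stmt10 {L : Type*} [Fintype L] [DecidableEq L]
    {m : L → Type*} [∀ l, Fintype (m l)] [∀ l, DecidableEq (m l)]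
    {K : Type*} [Fintype K] [DecidableEq K]
    (z : L → ℝ) (hz : Function.Injective z)
    (U ρ : Matrix ((l : L) × m l) ((l : L) × m l) ℂ)
    (X : K → Matrix ((l : L) × m l) ((l : L) × m l) ℂ)
    (hU : U ∈ Matrix.unitaryGroup ((l : L) × m l) ℂ)
    (hρ : AFL.IsDensity ρ) (hX : AFL.IsPartition X)
    (hUZ : U * AFL.symZ (m := m) z = AFL.symZ (m := m) z * U)
    (hρZ : ρ * AFL.symZ (m := m) z = AFL.symZ (m := m) z * ρ)
    (hXZ : ∀ i, X i * AFL.symZ (m := m) z = AFL.symZ (m := m) z * X i)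
    (t : ℕ) :
    AFL.HAFL ρ U X t ≤
      (∑ l, AFL.sectorProb ρ l *
        AFL.HAFL (AFL.sectorState ρ l) (AFL.restrict U l) (fun i => AFL.restrict (X i) l) t)
      + AFL.shannon (AFL.sectorProb ρ) := by
  open AFL Matrix in
  have hUb := eq_blockDiagonal'_restrict_of_commute hz hUZ
  have hρb := eq_blockDiagonal'_restrict_of_commute hz hρZ
  have hXb := funext fun i => eq_blockDiagonal'_restrict_of_commute hz (hXZ i)
  have hUl : ∀ l, (restrict U l)ᴴ * restrict U l = 1 :=
    conjTranspose_mul_self_eq_one_of_blockDiagonal' <| by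
      rw [← hUb]; exact mem_unitaryGroup_iff'.mp hU
  have hXl : ∀ l, IsPartition fun i => restrict (X i) l :=
    isPartition_of_blockDiagonal' (by rwa [← hXb])
  set σ := fun l => envState (multiKraus (restrict U l) (fun i => restrict (X i) l) t)
    (sectorState ρ l)
  have hmix : envState (multiKraus U X t) ρ = ∑ l, (sectorProb ρ l : ℂ) • σ l :=
    envState_multiKraus_eq_sum_smul hρ.1 hUb hρb hXb t
  have hσ : ∀ l, (σ l).PosSemidef :=
    fun l => envState_posSemidef _ (sectorState_posSemidef hρ.1 l)
  have htr : ∀ l, sectorProb ρ l ≠ 0 → (σ l).trace = 1 := fun l h => by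
    rw [trace_envState (isPartition_multiKraus (hUl l) (hXl l) t), trace_sectorState hρ.1 h]
  calc HAFL ρ U X t = vNEntropy (∑ l, (sectorProb ρ l : ℂ) • σ l) := by rw [HAFL, hmix]
    _ ≤ _ := vNEntropy_sum_smul_le _ σ (sectorProb_nonneg hρ.1) hσ htr
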